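/- Let k ≥ 3, and for j = 1, …, k let X_j be real n×p_j matrices with X_jᵀX_j invertible and hat matrices H_j = X_j(X_jᵀX_j)⁻¹X_jᵀ; let X = (X₁ X₂) with XᵀX invertible and H = X(XᵀX)⁻¹Xᵀ. Suppose the true models are y_j = X_j β_j + W_j θ_j + ε_j, where β_j ∈ ℝ^{p_j}, θ_j ∈ ℝ^{s_j}, W_j are random n×s_j matrices with E[W_j] = 0 that are mutually independent and independent of (ε₁, …, ε_k), and ε_j : Ω → ℝⁿ are square-integrable with E[ε_j] = 0 and E[ε_i ε_jᵀ] = σ_{ij} I with σ_{1j} ≥ 0 and σ_{2j} ≥ 0 for every j ≥ 3. Define the individual forecasts ŷ_j = H_j y_j and the combined forecast of the merged first two clusters ŷ_{1,2} = H(y₁ + y₂). Then E[‖Σ_{j=1}^k y_j − (ŷ_{1,2} + Σ_{j=3}^k ŷ_j)‖²] ≤ E[‖Σ_{j=1}^k y_j − Σ_{j=1}^k ŷ_j‖²]. -/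

import Mathlib

open Matrix MeasureTheory ProbabilityTheory
open scoped BigOperators

/-- The hat matrix `H_A = A (AᵀA)⁻¹ Aᵀ` of a design matrix `A`. -/
noncomputable def hatMat {n : ℕ} {q : Type*} [Fintype q] [DecidableEq q]
    (A : Matrix (Fin n) q ℝ) : Matrix (Fin n) (Fin n) ℝ :=
  A * (Aᵀ * A)⁻¹ * Aᵀ

/-!
Write `y_c = X_c β_c + Z_c` with noise `Z_c = W_c θ_c + ε_c`. The separate residual is `e + d`,
where `e` is the combined residual and `d = (H - H₁) y₁ + (H - H₂) y₂` lies in the range of the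
orthogonal projection `H`. The part `(I - H)(y₁ + y₂)` of `e` is orthogonal to that range, so
`E‖e + d‖² - E‖e‖² = E‖d‖² + 2 ∑_{j ≥ 3} E⟨d, (I - H_j) y_j⟩`. Since the design terms are
annihilated and the noise of distinct clusters has cross-moment `σ_{cj} I`, each summand equals
`σ_{cj} tr((H - H_c)(I - H_j))`, which is nonnegative as the trace of a product of two orthogonal
projections.
-/

open scoped ENNReal

section StarProjection

variable {m : Type*} [Fintype m]

lemma IsStarProjection.transpose_eq {P : Matrix m m ℝ} (hP : IsStarProjection P) : Pᵀ = P :=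
  (conjTranspose_eq_transpose_of_trivial P).symm.trans hP.isSelfAdjoint

lemma IsStarProjection.trace_mul_nonneg {P Q : Matrix m m ℝ} (hP : IsStarProjection P)
    (hQ : IsStarProjection Q) : 0 ≤ trace (P * Q) := by
  have hPh : Pᴴ = P := hP.isSelfAdjoint
  have hQh : Qᴴ = Q := hQ.isSelfAdjoint
  have h : trace (P * Q) = trace ((Q * P)ᴴ * (Q * P)) := by
    rw [conjTranspose_mul, hPh, hQh, Matrix.mul_assoc, ← Matrix.mul_assoc Q, hQ.isIdempotentElem.eq,
      ← Matrix.mul_assoc, trace_mul_comm (P * Q) P, ← Matrix.mul_assoc, hP.isIdempotentElem.eq]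
  exact h ▸ (posSemidef_conjTranspose_mul_self _).trace_nonneg

lemma IsStarProjection.dotProduct_sub_mulVec_eq_zero {P : Matrix m m ℝ}
    (hP : IsStarProjection P) {v d : m → ℝ} (hd : P *ᵥ d = d) : (v - P *ᵥ v) ⬝ᵥ d = 0 := by
  rw [sub_dotProduct, ← vecMul_transpose, ← dotProduct_mulVec, hP.transpose_eq, hd, sub_self]

end StarProjection

section HatMatrix

variable {n : ℕ} {q r : Type*} [Fintype q] [DecidableEq q] [Fintype r] [DecidableEq r]
  {A : Matrix (Fin n) q ℝ} {B : Matrix (Fin n) r ℝ}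

lemma hatMat_transpose (A : Matrix (Fin n) q ℝ) : (hatMat A)ᵀ = hatMat A := by
  simp [hatMat, transpose_mul, transpose_nonsing_inv, Matrix.mul_assoc]

lemma hatMat_mul_self (hA : IsUnit (Aᵀ * A)) : hatMat A * A = A := by
  simp only [hatMat, Matrix.mul_assoc]
  rw [nonsing_inv_mul _ ((isUnit_iff_isUnit_det _).mp hA), Matrix.mul_one]

lemma hatMat_mul_hatMat_of_mul_eq (h : hatMat B * A = A) : hatMat B * hatMat A = hatMat A := by
  calc hatMat B * hatMat A = hatMat B * A * ((Aᵀ * A)⁻¹ * Aᵀ) := by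
        simp only [hatMat, Matrix.mul_assoc]
    _ = hatMat A := by rw [h, hatMat, Matrix.mul_assoc]

lemma isStarProjection_hatMat (hA : IsUnit (Aᵀ * A)) : IsStarProjection (hatMat A) :=
  ⟨hatMat_mul_hatMat_of_mul_eq (hatMat_mul_self hA),
    (conjTranspose_eq_transpose_of_trivial _).trans (hatMat_transpose A)⟩

lemma one_sub_hatMat_mul_self (hA : IsUnit (Aᵀ * A)) : (1 - hatMat A) * A = 0 := by
  rw [Matrix.sub_mul, Matrix.one_mul, hatMat_mul_self hA, sub_self]

lemma hatMat_sub_hatMat_mul_self (hA : IsUnit (Aᵀ * A)) (h : hatMat B * A = A) :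
    (hatMat B - hatMat A) * A = 0 := by
  rw [Matrix.sub_mul, h, hatMat_mul_self hA, sub_self]

lemma hatMat_mul_hatMat_sub_hatMat (hB : IsUnit (Bᵀ * B)) (h : hatMat B * A = A) :
    hatMat B * (hatMat B - hatMat A) = hatMat B - hatMat A := by
  rw [Matrix.mul_sub, (isStarProjection_hatMat hB).isIdempotentElem.eq,
    hatMat_mul_hatMat_of_mul_eq h]

lemma isStarProjection_hatMat_sub_hatMat (hA : IsUnit (Aᵀ * A)) (hB : IsUnit (Bᵀ * B))
    (h : hatMat B * A = A) : IsStarProjection (hatMat B - hatMat A) :=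
  (isStarProjection_hatMat hA).sub_of_mul_eq_right (isStarProjection_hatMat hB)
    (hatMat_mul_hatMat_of_mul_eq h)

lemma hatMat_fromCols_mul (h : IsUnit ((fromCols A B)ᵀ * fromCols A B)) :
    hatMat (fromCols A B) * A = A ∧ hatMat (fromCols A B) * B = B := by
  have hAB := hatMat_mul_self h
  rwa [mul_fromCols, fromCols_ext_iff] at hAB

end HatMatrix

lemma Fin.sum_univ_eq_add_add_sum_filter_two_le {M : Type*} [AddCommMonoid M] {K : ℕ}
    (f : Fin (K + 3) → M) :
    ∑ j, f j = f 0 + f 1 + ∑ j ∈ Finset.univ.filter (fun j : Fin (K + 3) => 2 ≤ (j : ℕ)), f j := by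
  rw [← Finset.sum_filter_not_add_sum_filter Finset.univ (fun j : Fin (K + 3) => 2 ≤ (j : ℕ))]
  congr 1
  have h01 : Finset.univ.filter (fun j : Fin (K + 3) => ¬ 2 ≤ (j : ℕ)) = {0, 1} := by
    ext j
    simp only [Finset.mem_filter, Finset.mem_univ, true_and, Finset.mem_insert,
      Finset.mem_singleton, Fin.ext_iff, Fin.val_zero, Fin.val_one]
    omega
  rw [h01, Finset.sum_pair (by simp)]

section Moments

variable {Ω : Type*} [MeasurableSpace Ω] {P : Measure Ω} {ι κ κ' S : Type*} [Fintype ι]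

lemma MeasureTheory.MemLp.mulVec [Fintype κ] {p : ℝ≥0∞} {f : Ω → κ → ℝ} (hf : MemLp f p P)
    (A : Matrix ι κ ℝ) : MemLp (fun ω => A *ᵥ f ω) p P :=
  MemLp.of_eval fun i => memLp_finsetSum _ fun a _ => (hf.eval a).const_mul (A i a)

lemma memLp_of_mulVec [Fintype κ] [Fintype S] {p : ℝ≥0∞} {W : Ω → κ → S → ℝ}
    (hW : ∀ a l, MemLp (fun ω => W ω a l) p P) (θ : S → ℝ) :
    MemLp (fun ω => of (W ω) *ᵥ θ) p P :=
  MemLp.of_eval fun a => memLp_finsetSum _ fun l _ => (hW a l).mul_const (θ l)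

lemma integral_of_mulVec_apply_eq_zero [Fintype S] {W : Ω → κ → S → ℝ}
    (hW : ∀ a l, Integrable (fun ω => W ω a l) P) (hW0 : ∀ a l, ∫ ω, W ω a l ∂P = 0)
    (θ : S → ℝ) (a : κ) : ∫ ω, (of (W ω) *ᵥ θ) a ∂P = 0 := by
  simp only [mulVec, dotProduct, of_apply]
  rw [integral_finsetSum _ fun l _ => (hW a l).mul_const (θ l)]
  simp [integral_mul_const, hW0]

lemma measurable_of_mulVec [Fintype S] (θ : S → ℝ) :
    Measurable fun M : κ → S → ℝ => of M *ᵥ θ :=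
  measurable_pi_lambda _ fun a => Finset.measurable_sum _ fun l _ =>
    Measurable.mul_const (by exact (measurable_pi_apply l).comp (measurable_pi_apply a)) (θ l)

lemma integrable_dotProduct {f g : Ω → ι → ℝ} (hf : MemLp f 2 P) (hg : MemLp g 2 P) :
    Integrable (fun ω => f ω ⬝ᵥ g ω) P :=
  integrable_finsetSum _ fun i _ => (hf.eval i).integrable_mul (hg.eval i)

lemma integral_dotProduct_self_le_add {e d : Ω → ι → ℝ} (he : MemLp e 2 P) (hd : MemLp d 2 P)
    (hed : 0 ≤ ∫ ω, e ω ⬝ᵥ d ω ∂P) :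
    ∫ ω, e ω ⬝ᵥ e ω ∂P ≤ ∫ ω, (e ω + d ω) ⬝ᵥ (e ω + d ω) ∂P := by
  have hpt (ω : Ω) : (e ω + d ω) ⬝ᵥ (e ω + d ω) = e ω ⬝ᵥ e ω + d ω ⬝ᵥ d ω + 2 * (e ω ⬝ᵥ d ω) := by
    rw [add_dotProduct, dotProduct_add, dotProduct_add, dotProduct_comm (d ω) (e ω)]
    ring
  simp_rw [hpt]
  rw [integral_add (f := fun ω => e ω ⬝ᵥ e ω + d ω ⬝ᵥ d ω)
    ((integrable_dotProduct he he).add (integrable_dotProduct hd hd))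
    ((integrable_dotProduct he hd).const_mul 2), integral_add (integrable_dotProduct he he)
    (integrable_dotProduct hd hd), integral_const_mul]
  have hdd : 0 ≤ ∫ ω, d ω ⬝ᵥ d ω ∂P :=
    integral_nonneg fun ω => Finset.sum_nonneg fun i _ => mul_self_nonneg (d ω i)
  linarith

lemma integral_sum_dotProduct_sum_nonneg {α β : Type*} (s : Finset α) (t : Finset β)
    {f : α → Ω → ι → ℝ} {g : β → Ω → ι → ℝ} (hf : ∀ i ∈ s, MemLp (f i) 2 P)
    (hg : ∀ j ∈ t, MemLp (g j) 2 P) (h : ∀ i ∈ s, ∀ j ∈ t, 0 ≤ ∫ ω, f i ω ⬝ᵥ g j ω ∂P) :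
    0 ≤ ∫ ω, (∑ i ∈ s, f i ω) ⬝ᵥ (∑ j ∈ t, g j ω) ∂P := by
  simp_rw [sum_dotProduct, dotProduct_sum]
  rw [integral_finsetSum _ fun i hi => integrable_finsetSum _ fun j hj =>
    integrable_dotProduct (hf i hi) (hg j hj)]
  refine Finset.sum_nonneg fun i hi => ?_
  rw [integral_finsetSum _ fun j hj => integrable_dotProduct (hf i hi) (hg j hj)]
  exact Finset.sum_nonneg fun j hj => h i hi j hj

lemma integral_mulVec_dotProduct_mulVec [Fintype κ] [DecidableEq κ] {f g : Ω → κ → ℝ}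
    (hf : MemLp f 2 P) (hg : MemLp g 2 P) {c : ℝ}
    (hfg : ∀ a b, ∫ ω, f ω a * g ω b ∂P = (c • (1 : Matrix κ κ ℝ)) a b) (A B : Matrix ι κ ℝ) :
    ∫ ω, (A *ᵥ f ω) ⬝ᵥ (B *ᵥ g ω) ∂P = c * trace (Aᵀ * B) := by
  have hpt (ω : Ω) :
      (A *ᵥ f ω) ⬝ᵥ (B *ᵥ g ω) = ∑ a, ∑ b, (Aᵀ * B) a b * (f ω a * g ω b) := by
    rw [dotProduct_mulVec, ← vecMul_transpose, vecMul_vecMul]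
    simp only [dotProduct, vecMul, Finset.sum_mul]
    rw [Finset.sum_comm]
    exact Finset.sum_congr rfl fun a _ => Finset.sum_congr rfl fun b _ => by ring
  have hint (a b : κ) : Integrable (fun ω => (Aᵀ * B) a b * (f ω a * g ω b)) P :=
    ((hf.eval a).integrable_mul (hg.eval b)).const_mul _
  simp_rw [hpt]
  rw [integral_finsetSum _ fun a _ => integrable_finsetSum _ fun b _ => hint a b]
  simp_rw [integral_finsetSum _ fun b _ => hint _ b, integral_const_mul, hfg]
  simp [trace, one_apply, Finset.mul_sum, mul_comm]

lemma ProbabilityTheory.IndepFun.integral_apply_mul_apply {U : Ω → κ → ℝ} {V : Ω → κ' → ℝ}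
    (h : IndepFun U V P) (hU : AEStronglyMeasurable U P) (hV : AEStronglyMeasurable V P)
    (a : κ) (b : κ') : ∫ ω, U ω a * V ω b ∂P = (∫ ω, U ω a ∂P) * ∫ ω, V ω b ∂P :=
  (h.comp (measurable_pi_apply a) (measurable_pi_apply b)).integral_fun_mul_eq_mul_integral
    ((continuous_apply a).comp_aestronglyMeasurable hU)
    ((continuous_apply b).comp_aestronglyMeasurable hV)

lemma integral_add_apply_mul_add_apply [Fintype κ] [Fintype κ'] {U Y : Ω → κ → ℝ}
    {U' Y' : Ω → κ' → ℝ} (hU : MemLp U 2 P) (hY : MemLp Y 2 P) (hU' : MemLp U' 2 P)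
    (hY' : MemLp Y' 2 P) (hUU' : IndepFun U U' P) (hUY' : IndepFun U Y' P)
    (hYU' : IndepFun Y U' P) (hU0 : ∀ a, ∫ ω, U ω a ∂P = 0) (hU'0 : ∀ b, ∫ ω, U' ω b ∂P = 0)
    (a : κ) (b : κ') :
    ∫ ω, (U ω + Y ω) a * (U' ω + Y' ω) b ∂P = ∫ ω, Y ω a * Y' ω b ∂P := by
  have hi {F : Ω → κ → ℝ} {G : Ω → κ' → ℝ} (hF : MemLp F 2 P) (hG : MemLp G 2 P) :
      Integrable (fun ω => F ω a * G ω b) P := (hF.eval a).integrable_mul (hG.eval b)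
  simp only [Pi.add_apply, add_mul, mul_add]
  rw [integral_add, integral_add (hi hU hU') (hi hY hU'), integral_add (hi hU hY') (hi hY hY'),
    hUU'.integral_apply_mul_apply hU.1 hU'.1, hUY'.integral_apply_mul_apply hU.1 hY'.1,
    hYU'.integral_apply_mul_apply hY.1 hU'.1, hU0, hU'0]
  · simp
  · exact (hi hU hU').add (hi hY hU')
  · exact (hi hU hY').add (hi hY hY')

end Moments

section Response

variable {Ω : Type*} [MeasurableSpace Ω] {P : Measure Ω} [IsFiniteMeasure P]
  {m ι κ : Type*} [Fintype m] [Fintype ι]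

lemma memLp_response {q S : Type*} [Fintype q] [Fintype S] {p : ℝ≥0∞} (X : Matrix m q ℝ)
    (β : q → ℝ) {W : Ω → m → S → ℝ} (θ : S → ℝ) {ε : Ω → m → ℝ}
    (hW : ∀ a l, MemLp (fun ω => W ω a l) p P) (hε : ∀ a, MemLp (fun ω => ε ω a) p P) :
    MemLp (fun ω => X *ᵥ β + of (W ω) *ᵥ θ + ε ω) p P :=
  ((memLp_const (X *ᵥ β)).add (memLp_of_mulVec hW θ)).add (MemLp.of_eval hε)

lemma integral_response_dotProduct [DecidableEq m] {Q S : κ → Type*} [∀ j, Fintype (Q j)]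
    [∀ j, Fintype (S j)] (X : (j : κ) → Matrix m (Q j) ℝ) (β : (j : κ) → Q j → ℝ)
    (θ : (j : κ) → S j → ℝ) (W : (j : κ) → Ω → m → S j → ℝ) (ε : κ → Ω → m → ℝ)
    {i j : κ} {c : ℝ}
    (hWL2 : ∀ j a l, MemLp (fun ω => W j ω a l) 2 P)
    (hWmean : ∀ j a l, ∫ ω, W j ω a l ∂P = 0)
    (hWindep : iIndepFun W P)
    (hWε : IndepFun (fun ω => fun j => W j ω) (fun ω => fun j => ε j ω) P)
    (hεL2 : ∀ j a, MemLp (fun ω => ε j ω a) 2 P)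
    (hcov : ∀ a b, ∫ ω, ε i ω a * ε j ω b ∂P = (c • (1 : Matrix m m ℝ)) a b)
    (hij : i ≠ j) {A B : Matrix ι m ℝ} (hA : A * X i = 0) (hB : B * X j = 0) :
    ∫ ω, (A *ᵥ (X i *ᵥ β i + of (W i ω) *ᵥ θ i + ε i ω)) ⬝ᵥ
      (B *ᵥ (X j *ᵥ β j + of (W j ω) *ᵥ θ j + ε j ω)) ∂P = c * trace (Aᵀ * B) := by
  have hdrop {C : Matrix ι m ℝ} {k : κ} (hC : C * X k = 0) (ω : Ω) :
      C *ᵥ (X k *ᵥ β k + of (W k ω) *ᵥ θ k + ε k ω) = C *ᵥ (of (W k ω) *ᵥ θ k + ε k ω) := by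
    rw [add_assoc, mulVec_add, mulVec_mulVec, hC, zero_mulVec, zero_add]
  simp_rw [hdrop hA, hdrop hB]
  set V : (k : κ) → Ω → m → ℝ := fun k ω => of (W k ω) *ᵥ θ k
  have hV (k : κ) : MemLp (V k) 2 P := memLp_of_mulVec (hWL2 k) (θ k)
  have hε (k : κ) : MemLp (ε k) 2 P := MemLp.of_eval (hεL2 k)
  have hV0 (k : κ) : ∀ a, ∫ ω, V k ω a ∂P = 0 :=
    integral_of_mulVec_apply_eq_zero (fun a l => (hWL2 k a l).integrable one_le_two) (hWmean k) _
  have hVε (k l : κ) : IndepFun (V k) (ε l) P :=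
    hWε.comp ((measurable_of_mulVec (θ k)).comp (measurable_pi_apply k)) (measurable_pi_apply l)
  refine integral_mulVec_dotProduct_mulVec ((hV i).add (hε i)) ((hV j).add (hε j))
    (fun a b => ?_) A B
  rw [← hcov]
  exact integral_add_apply_mul_add_apply (hV i) (hε i) (hV j) (hε j)
    ((hWindep.indepFun hij).comp (measurable_of_mulVec (θ i)) (measurable_of_mulVec (θ j)))
    (hVε i j) (hVε j i).symm (hV0 i) (hV0 j) a b

end Response

/-- Clusters are indexed by `Fin (K + 3)`, so `k = K + 3 ≥ 3`; the merged clusters are `0` and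
`1`. -/
theorem combining_two_clusters_decreases_expected_training_error_general {n : ℕ} (K : ℕ)
    {Ω : Type*} [MeasurableSpace Ω] (P : Measure Ω) [IsProbabilityMeasure P]
    (q s : Fin (K + 3) → ℕ)
    (X : (j : Fin (K + 3)) → Matrix (Fin n) (Fin (q j)) ℝ)
    (hXj : ∀ j, IsUnit ((X j)ᵀ * X j))
    (hX : IsUnit ((fromCols (X 0) (X 1))ᵀ * fromCols (X 0) (X 1)))
    (β : (j : Fin (K + 3)) → Fin (q j) → ℝ)
    (θ : (j : Fin (K + 3)) → Fin (s j) → ℝ)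
    (W : (j : Fin (K + 3)) → Ω → Fin n → Fin (s j) → ℝ)
    (ε : Fin (K + 3) → Ω → Fin n → ℝ)
    (σ : Fin (K + 3) → Fin (K + 3) → ℝ)
    (hWL2 : ∀ j i l, MemLp (fun ω => W j ω i l) 2 P)
    (hWmean : ∀ j i l, ∫ ω, W j ω i l ∂P = 0)
    (hWindep : iIndepFun W P)
    (hWε : IndepFun (fun ω => fun j => W j ω) (fun ω => fun j => ε j ω) P)
    (hεL2 : ∀ j i, MemLp (fun ω => ε j ω i) 2 P)
    (hcov : ∀ i j a b, ∫ ω, ε i ω a * ε j ω b ∂P =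
      (σ i j • (1 : Matrix (Fin n) (Fin n) ℝ)) a b)
    (hσ : ∀ j : Fin (K + 3), 2 ≤ (j : ℕ) → 0 ≤ σ 0 j ∧ 0 ≤ σ 1 j) :
    let y : (j : Fin (K + 3)) → Ω → Fin n → ℝ :=
      fun j ω => (X j).mulVec (β j) + (Matrix.of (W j ω)).mulVec (θ j) + ε j ω
    let yhat : (j : Fin (K + 3)) → Ω → Fin n → ℝ :=
      fun j ω => (hatMat (X j)).mulVec (y j ω)
    let H := hatMat (fromCols (X 0) (X 1))
    let yhat12 : Ω → Fin n → ℝ := fun ω => H.mulVec (y 0 ω + y 1 ω)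
    (∫ ω, ((∑ j, y j ω) -
        (yhat12 ω + ∑ j ∈ Finset.univ.filter (fun j : Fin (K + 3) => 2 ≤ (j : ℕ)), yhat j ω)) ⬝ᵥ
        ((∑ j, y j ω) -
        (yhat12 ω + ∑ j ∈ Finset.univ.filter (fun j : Fin (K + 3) => 2 ≤ (j : ℕ)), yhat j ω)) ∂P)
      ≤ ∫ ω, ((∑ j, y j ω) - ∑ j, yhat j ω) ⬝ᵥ ((∑ j, y j ω) - ∑ j, yhat j ω) ∂P := by
  intro y yhat H yhat12
  set J := Finset.univ.filter (fun j : Fin (K + 3) => 2 ≤ (j : ℕ))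
  have hHX : ∀ c ∈ ({0, 1} : Finset (Fin (K + 3))), H * X c = X c := by
    simpa using hatMat_fromCols_mul hX
  have hσJ : ∀ c ∈ ({0, 1} : Finset (Fin (K + 3))), ∀ j ∈ J, c ≠ j ∧ 0 ≤ σ c j := by
    simp only [Finset.mem_insert, Finset.mem_singleton, forall_eq_or_imp, forall_eq, J,
      Finset.mem_filter, Finset.mem_univ, true_and]
    exact ⟨fun j hj => ⟨by rintro rfl; simp at hj, (hσ j hj).1⟩,
      fun j hj => ⟨by rintro rfl; simp at hj, (hσ j hj).2⟩⟩
  have hy (j : Fin (K + 3)) : MemLp (y j) 2 P := memLp_response _ _ _ (hWL2 j) (hεL2 j)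
  set r : Ω → Fin n → ℝ := fun ω => ∑ j ∈ J, (1 - hatMat (X j)) *ᵥ y j ω
  set d : Ω → Fin n → ℝ := fun ω => ∑ c ∈ {0, 1}, (H - hatMat (X c)) *ᵥ y c ω
  set e : Ω → Fin n → ℝ := fun ω => y 0 ω + y 1 ω - H *ᵥ (y 0 ω + y 1 ω) + r ω
  have hcomb (ω : Ω) : (∑ j, y j ω) - (yhat12 ω + ∑ j ∈ J, yhat j ω) = e ω := by
    simp only [e, r, yhat12, yhat, Fin.sum_univ_eq_add_add_sum_filter_two_le, sub_mulVec,
      one_mulVec, Finset.sum_sub_distrib]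
    abel
  have hsep (ω : Ω) : (∑ j, y j ω) - ∑ j, yhat j ω = e ω + d ω := by
    simp only [e, r, d, yhat, Fin.sum_univ_eq_add_add_sum_filter_two_le, sub_mulVec,
      one_mulVec, Finset.sum_sub_distrib, mulVec_add, Finset.sum_pair zero_ne_one]
    abel
  have horth (ω : Ω) : e ω ⬝ᵥ d ω = d ω ⬝ᵥ r ω := by
    have hHd : H *ᵥ d ω = d ω := by
      simp only [d, mulVec_sum, mulVec_mulVec]
      exact Finset.sum_congr rfl fun c hc => by rw [hatMat_mul_hatMat_sub_hatMat hX (hHX c hc)]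
    rw [add_dotProduct, (isStarProjection_hatMat hX).dotProduct_sub_mulVec_eq_zero hHd, zero_add,
      dotProduct_comm]
  have hcross : 0 ≤ ∫ ω, d ω ⬝ᵥ r ω ∂P := by
    refine integral_sum_dotProduct_sum_nonneg _ _ (fun c _ => (hy c).mulVec _)
      (fun j _ => (hy j).mulVec _) fun c hc j hj => ?_
    have hD := isStarProjection_hatMat_sub_hatMat (hXj c) hX (hHX c hc)
    rw [integral_response_dotProduct X β θ W ε hWL2 hWmean hWindep hWε hεL2 (hcov c j)
      (hσJ c hc j hj).1 (hatMat_sub_hatMat_mul_self (hXj c) (hHX c hc))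
      (one_sub_hatMat_mul_self (hXj j)), hD.transpose_eq]
    exact mul_nonneg (hσJ c hc j hj).2
      (hD.trace_mul_nonneg (isStarProjection_hatMat (hXj j)).one_sub)
  simp_rw [hcomb, hsep]
  refine integral_dotProduct_self_le_add ?_ ?_ (by simpa only [horth] using hcross)
  · exact (((hy 0).add (hy 1)).sub (((hy 0).add (hy 1)).mulVec H)).add
      (memLp_finsetSum _ fun j _ => (hy j).mulVec _)
  · exact memLp_finsetSum _ fun c _ => (hy c).mulVec _

/-- **Theorem 1.** With `k = K + 3 ≥ 3` clusters (indexed by `Fin (K+3)`, the merged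
clusters being `0` and `1`), true models `y_j = X_jβ_j + W_jθ_j + ε_j`, mean-zero mutually
independent `W_j` independent of the errors, `E[ε_i ε_jᵀ] = σ_{ij} I` with `σ_{0j} ≥ 0` and
`σ_{1j} ≥ 0` for all `j ≥ 2`: combining the first two clusters does not increase the
expected training error of the aggregate forecast. -/
theorem combining_two_clusters_decreases_expected_training_error {n : ℕ} (K : ℕ)
    {Ω : Type*} [MeasurableSpace Ω] (P : Measure Ω) [IsProbabilityMeasure P]
    (q s : Fin (K + 3) → ℕ)
    (X : (j : Fin (K + 3)) → Matrix (Fin n) (Fin (q j)) ℝ)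
    (hXj : ∀ j, IsUnit ((X j)ᵀ * X j))
    (hX : IsUnit ((fromCols (X 0) (X 1))ᵀ * fromCols (X 0) (X 1)))
    (β : (j : Fin (K + 3)) → Fin (q j) → ℝ)
    (θ : (j : Fin (K + 3)) → Fin (s j) → ℝ)
    (W : (j : Fin (K + 3)) → Ω → Fin n → Fin (s j) → ℝ)
    (ε : Fin (K + 3) → Ω → Fin n → ℝ)
    (σ : Fin (K + 3) → Fin (K + 3) → ℝ)
    (hWL2 : ∀ j i l, MemLp (fun ω => W j ω i l) 2 P)
    (hWmean : ∀ j i l, ∫ ω, W j ω i l ∂P = 0)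
    (hWindep : iIndepFun W P)
    (hWε : IndepFun (fun ω => fun j => W j ω) (fun ω => fun j => ε j ω) P)
    (hεL2 : ∀ j i, MemLp (fun ω => ε j ω i) 2 P)
    (hεmean : ∀ j i, ∫ ω, ε j ω i ∂P = 0)
    (hcov : ∀ i j a b, ∫ ω, ε i ω a * ε j ω b ∂P =
      (σ i j • (1 : Matrix (Fin n) (Fin n) ℝ)) a b)
    (hσ : ∀ j : Fin (K + 3), 2 ≤ (j : ℕ) → 0 ≤ σ 0 j ∧ 0 ≤ σ 1 j) :
    let y : (j : Fin (K + 3)) → Ω → Fin n → ℝ :=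
      fun j ω => (X j).mulVec (β j) + (Matrix.of (W j ω)).mulVec (θ j) + ε j ω
    let yhat : (j : Fin (K + 3)) → Ω → Fin n → ℝ :=
      fun j ω => (hatMat (X j)).mulVec (y j ω)
    let H := hatMat (fromCols (X 0) (X 1))
    let yhat12 : Ω → Fin n → ℝ := fun ω => H.mulVec (y 0 ω + y 1 ω)
    (∫ ω, ((∑ j, y j ω) -
        (yhat12 ω + ∑ j ∈ Finset.univ.filter (fun j : Fin (K + 3) => 2 ≤ (j : ℕ)), yhat j ω)) ⬝ᵥ
        ((∑ j, y j ω) -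
        (yhat12 ω + ∑ j ∈ Finset.univ.filter (fun j : Fin (K + 3) => 2 ≤ (j : ℕ)), yhat j ω)) ∂P)
      ≤ ∫ ω, ((∑ j, y j ω) - ∑ j, yhat j ω) ⬝ᵥ ((∑ j, y j ω) - ∑ j, yhat j ω) ∂P :=
  combining_two_clusters_decreases_expected_training_error_general K P q s X hXj hX β θ W ε σ hWL2
    hWmean hWindep hWε hεL2 hcov hσ
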